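/- Let K be a field with an additive ultrametric valuation v, and let r₁, r₂, r₃ ∈ K be pairwise distinct. Set a₁ := r₁ + r₂ + r₃, a₂ := r₁r₂ + r₁r₃ + r₂r₃, a₃ := r₁r₂r₃ (so x³ − a₁x² + a₂x − a₃ = (x − r₁)(x − r₂)(x − r₃)), and define c₂ := a₁⁴ − 6·a₂·a₁² + 9·a₂² and c₃ := −a₂²·a₁² + 4·a₂³ + 4·a₃·a₁³ − 18·a₁·a₂·a₃ + 27·a₃². Then the three values v(r₁ − r₂), v(r₁ − r₃), v(r₂ − r₃) are NOT all equal (i.e., the tree of the cubic is of type II) if and only if 3·v(c₂) < 2·v(c₃), the comparison being in ℝ ∪ {∞}. -/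
import Mathlib



private lemma val_neg_aux {K : Type*} [Field K] (v : K → WithTop ℝ)
    (hv0 : ∀ x : K, v x = ⊤ ↔ x = 0)
    (hvmul : ∀ x y : K, v (x * y) = v x + v y) (x : K) : v (-x) = v x := by
  have h3 : v (1 : K) ≠ ⊤ := by simp only [ne_eq, hv0]; exact one_ne_zero
  have h1 : v (-1 : K) ≠ ⊤ := by simp only [ne_eq, hv0]; exact neg_ne_zero.mpr one_ne_zero
  obtain ⟨o, ho⟩ := WithTop.ne_top_iff_exists.mp h3
  obtain ⟨m, hm⟩ := WithTop.ne_top_iff_exists.mp h1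
  have h4 : v (1:K) + v (1:K) = v (1:K) := by rw [← hvmul]; norm_num
  have h2 : v (-1 : K) + v (-1 : K) = v (1 : K) := by rw [← hvmul]; norm_num
  rw [← ho] at h4 h2
  rw [← hm] at h2
  have ho0 : o = 0 := by
    have : o + o = o := by exact_mod_cast h4
    linarith
  have hm0 : m = 0 := by
    have : m + m = o := by exact_mod_cast h2
    linarith
  have : v (-x) = v ((-1) * x) := by norm_num
  rw [this, hvmul, ← hm, hm0]
  simp

private lemma val_add_lt_aux {K : Type*} [Field K] (v : K → WithTop ℝ)
    (hv0 : ∀ x : K, v x = ⊤ ↔ x = 0)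
    (hvmul : ∀ x y : K, v (x * y) = v x + v y)
    (hvadd : ∀ x y : K, min (v x) (v y) ≤ v (x + y))
    {x y : K} (h : v x < v y) : v (x + y) = v x := by
  refine le_antisymm ?_ ?_
  · have h2 := hvadd (x + y) (-y)
    rw [add_neg_cancel_right, val_neg_aux v hv0 hvmul] at h2
    by_contra hlt
    push_neg at hlt
    exact absurd h2 (not_le.mpr (lt_min hlt h))
  · have h3 := hvadd x y
    rwa [min_eq_left h.le] at h3

/-- Let `K` carry an additive ultrametric valuation `v` and let
`r₁, r₂, r₃ ∈ K` be pairwise distinct, with elementary symmetric functions `a₁, a₂, a₃`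
and tropical-invariant coefficients
`c₂ = a₁⁴ - 6 a₂ a₁² + 9 a₂²` and
`c₃ = -a₂² a₁² + 4 a₂³ + 4 a₃ a₁³ - 18 a₁ a₂ a₃ + 27 a₃²`.
Then the three values `v (r₁ - r₂), v (r₁ - r₃), v (r₂ - r₃)` are NOT all equal (the tree
of the cubic is of type II) if and only if `3 v(c₂) < 2 v(c₃)` in `ℝ ∪ {∞}`. -/
theorem cubic_tree_type_II_iff
    {K : Type*} [Field K] (v : K → WithTop ℝ)
    (hv0 : ∀ x : K, v x = ⊤ ↔ x = 0)
    (hvmul : ∀ x y : K, v (x * y) = v x + v y)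
    (hvadd : ∀ x y : K, min (v x) (v y) ≤ v (x + y))
    (r₁ r₂ r₃ : K)
    (h12 : r₁ ≠ r₂) (h13 : r₁ ≠ r₃) (h23 : r₂ ≠ r₃)
    (a₁ a₂ a₃ c₂ c₃ : K)
    (ha₁ : a₁ = r₁ + r₂ + r₃)
    (ha₂ : a₂ = r₁ * r₂ + r₁ * r₃ + r₂ * r₃)
    (ha₃ : a₃ = r₁ * r₂ * r₃)
    (hc₂ : c₂ = a₁ ^ 4 - 6 * a₂ * a₁ ^ 2 + 9 * a₂ ^ 2)
    (hc₃ : c₃ = -a₂ ^ 2 * a₁ ^ 2 + 4 * a₂ ^ 3 + 4 * a₃ * a₁ ^ 3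
      - 18 * a₁ * a₂ * a₃ + 27 * a₃ ^ 2) :
    (¬ (v (r₁ - r₂) = v (r₁ - r₃) ∧ v (r₂ - r₃) = v (r₁ - r₃)))
      ↔ 3 • v c₂ < 2 • v c₃ := by
  have hneg := val_neg_aux v hv0 hvmul
  -- real values of the three differences
  have hne12 : v (r₁ - r₂) ≠ ⊤ := by
    simp only [ne_eq, hv0]; exact sub_ne_zero.mpr h12
  have hne13 : v (r₁ - r₃) ≠ ⊤ := by
    simp only [ne_eq, hv0]; exact sub_ne_zero.mpr h13
  have hne23 : v (r₂ - r₃) ≠ ⊤ := by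
    simp only [ne_eq, hv0]; exact sub_ne_zero.mpr h23
  obtain ⟨A, hA⟩ := WithTop.ne_top_iff_exists.mp hne12
  obtain ⟨B, hB⟩ := WithTop.ne_top_iff_exists.mp hne13
  obtain ⟨C, hC⟩ := WithTop.ne_top_iff_exists.mp hne23
  -- value of c₃
  have hvc₃ : v c₃ = ((2*(A+B+C) : ℝ) : WithTop ℝ) := by
    have e : c₃ = -(((r₁-r₂)*((r₁-r₃)*(r₂-r₃)))*((r₁-r₂)*((r₁-r₃)*(r₂-r₃)))) := by
      rw [hc₃, ha₁, ha₂, ha₃]; ring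
    rw [e, hneg, hvmul, hvmul, hvmul, ← hA, ← hB, ← hC]
    norm_cast; ring
  -- values of the three products
  have hP : v (((r₁-r₂)*(r₁-r₃))^2) = ((2*(A+B):ℝ) : WithTop ℝ) := by
    rw [sq, hvmul, hvmul, ← hA, ← hB]; norm_cast; ring
  have hQ : v (((r₁-r₂)*(r₂-r₃))^2) = ((2*(A+C):ℝ) : WithTop ℝ) := by
    rw [sq, hvmul, hvmul, ← hA, ← hC]; norm_cast; ring
  have hR : v (((r₁-r₃)*(r₂-r₃))^2) = ((2*(B+C):ℝ) : WithTop ℝ) := by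
    rw [sq, hvmul, hvmul, ← hB, ← hC]; norm_cast; ring
  -- helper: value of c₂ when one term strictly dominates
  have hc2val : ∀ X Y Z : K, c₂ = X + (Y + Z) → ∀ p q r : ℝ,
      v X = (p : WithTop ℝ) → v Y = (q : WithTop ℝ) → v Z = (r : WithTop ℝ) →
      p < q → p < r → v c₂ = (p : WithTop ℝ) := by
    intro X Y Z hE p q r hX hY hZ hq hr
    have hYZ : ((min q r : ℝ) : WithTop ℝ) ≤ v (Y + Z) := by
      have h := hvadd Y Z
      rw [hY, hZ, ← WithTop.coe_min] at h
      exact h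
    have hlt2 : v X < v (Y + Z) := by
      rw [hX]
      exact lt_of_lt_of_le (by exact_mod_cast lt_min hq hr) hYZ
    rw [hE, val_add_lt_aux v hv0 hvmul hvadd hlt2, hX]
  constructor
  · intro hne
    obtain ⟨m, t, hmt, hvc₂, hsum⟩ :
        ∃ m t : ℝ, m < t ∧ v c₂ = ((4*m : ℝ) : WithTop ℝ) ∧ A + B + C = 2*m + t := by
      rcases lt_trichotomy A B with hab | hab | hab
      · -- A < B ⇒ C = A ; dominant Q
        have hCA : C = A := by
          have h' : v (-(r₁-r₂)) < v (r₁-r₃) := by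
            rw [hneg, ← hA, ← hB]; exact_mod_cast hab
          have h2 := val_add_lt_aux v hv0 hvmul hvadd h'
          rw [show -(r₁-r₂) + (r₁-r₃) = r₂ - r₃ by ring, hneg, ← hA, ← hC] at h2
          exact_mod_cast h2
        refine ⟨A, B, hab, ?_, by rw [hCA]; ring⟩
        have he : c₂ = ((r₁-r₂)*(r₂-r₃))^2
            + (((r₁-r₂)*(r₁-r₃))^2 + ((r₁-r₃)*(r₂-r₃))^2) := by
          rw [hc₂, ha₁, ha₂]; ring
        have := hc2val _ _ _ he (2*(A+C)) (2*(A+B)) (2*(B+C)) hQ hP hR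
          (by rw [hCA]; linarith) (by rw [hCA]; linarith)
        rw [this, hCA]; norm_cast; ring
      · -- A = B : need C ≠ B, and then B < C
        rcases lt_trichotomy C B with hcb | hcb | hcb
        · -- C < B forces A = C, contradiction with A = B
          exfalso
          have h' : v (-(r₂-r₃)) < v (r₁-r₃) := by
            rw [hneg, ← hC, ← hB]; exact_mod_cast hcb
          have h2 := val_add_lt_aux v hv0 hvmul hvadd h'
          rw [show -(r₂-r₃) + (r₁-r₃) = r₁ - r₂ by ring, hneg, ← hA, ← hC] at h2
          have : A = C := by exact_mod_cast h2
          linarith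
        · exact absurd ⟨by rw [← hA, ← hB]; exact_mod_cast hab,
            by rw [← hC, ← hB]; exact_mod_cast hcb⟩ hne
        · -- A = B < C ; dominant P
          refine ⟨A, C, by linarith, ?_, by linarith⟩
          have he : c₂ = ((r₁-r₂)*(r₁-r₃))^2
              + (((r₁-r₂)*(r₂-r₃))^2 + ((r₁-r₃)*(r₂-r₃))^2) := by
            rw [hc₂, ha₁, ha₂]; ring
          have := hc2val _ _ _ he (2*(A+B)) (2*(A+C)) (2*(B+C)) hP hQ hR
            (by linarith) (by linarith)
          rw [this, ← hab]; norm_cast; ring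
      · -- B < A ⇒ C = B ; dominant R
        have hCB : C = B := by
          have h' : v (r₁-r₃) < v (-(r₁-r₂)) := by
            rw [hneg, ← hA, ← hB]; exact_mod_cast hab
          have h2 := val_add_lt_aux v hv0 hvmul hvadd h'
          rw [show (r₁-r₃) + -(r₁-r₂) = r₂ - r₃ by ring, ← hB, ← hC] at h2
          exact_mod_cast h2
        refine ⟨B, A, hab, ?_, by rw [hCB]; ring⟩
        have he : c₂ = ((r₁-r₃)*(r₂-r₃))^2
            + (((r₁-r₂)*(r₁-r₃))^2 + ((r₁-r₂)*(r₂-r₃))^2) := by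
          rw [hc₂, ha₁, ha₂]; ring
        have := hc2val _ _ _ he (2*(B+C)) (2*(A+B)) (2*(A+C)) hR hP hQ
          (by rw [hCB]; linarith) (by rw [hCB]; linarith)
        rw [this, hCB]; norm_cast; ring
    have h3 : 3 • v c₂ = ((12*m : ℝ) : WithTop ℝ) := by
      rw [hvc₂, succ_nsmul, two_nsmul]; norm_cast; ring
    have h2 : 2 • v c₃ = ((4*(2*m+t) : ℝ) : WithTop ℝ) := by
      rw [hvc₃, hsum, two_nsmul]; norm_cast; ring
    rw [h3, h2]
    exact_mod_cast (by linarith : 12*m < 4*(2*m+t))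
  · rintro hlt ⟨h1, h2⟩
    have hAB : A = B := by rw [← hA, ← hB] at h1; exact_mod_cast h1
    have hCB : C = B := by rw [← hC, ← hB] at h2; exact_mod_cast h2
    have hP' : v (((r₁-r₂)*(r₁-r₃))^2) = ((4*B : ℝ) : WithTop ℝ) := by
      rw [hP, hAB]; norm_cast; ring
    have hQ' : v (((r₁-r₂)*(r₂-r₃))^2) = ((4*B : ℝ) : WithTop ℝ) := by
      rw [hQ, hAB, hCB]; norm_cast; ring
    have hR' : v (((r₁-r₃)*(r₂-r₃))^2) = ((4*B : ℝ) : WithTop ℝ) := by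
      rw [hR, hCB]; norm_cast; ring
    have he : c₂ = ((r₁-r₂)*(r₁-r₃))^2
        + (((r₁-r₂)*(r₂-r₃))^2 + ((r₁-r₃)*(r₂-r₃))^2) := by
      rw [hc₂, ha₁, ha₂]; ring
    have hQR : ((4*B : ℝ) : WithTop ℝ) ≤ v (((r₁-r₂)*(r₂-r₃))^2 + ((r₁-r₃)*(r₂-r₃))^2) := by
      have h := hvadd (((r₁-r₂)*(r₂-r₃))^2) (((r₁-r₃)*(r₂-r₃))^2)
      rwa [hQ', hR', min_self] at h
    have hge : ((4*B : ℝ) : WithTop ℝ) ≤ v c₂ := by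
      rw [he]
      exact le_trans (le_min (le_of_eq hP'.symm) hQR)
        (hvadd (((r₁-r₂)*(r₁-r₃))^2) _)
    have h3 : ((12*B : ℝ) : WithTop ℝ) ≤ 3 • v c₂ := by
      calc ((12*B : ℝ) : WithTop ℝ) = 3 • (((4*B:ℝ)) : WithTop ℝ) := by
            rw [succ_nsmul, two_nsmul]; norm_cast; ring
        _ ≤ 3 • v c₂ := nsmul_le_nsmul_right hge 3
    have h4 : 2 • v c₃ = ((12*B : ℝ) : WithTop ℝ) := by
      rw [hvc₃, hAB, hCB, two_nsmul]; norm_cast; ring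
    rw [h4] at hlt
    exact absurd hlt (not_lt.mpr h3)
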